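/- In the one-period market with prices y ∈ L^0(ℝ^d, H) and Y ∈ L^0(ℝ^d, F), AIP holds if and only if p(g) ≥ 0 a.s. for some nonnegative H-normal integrand g such that there exists a concave function φ with g ≤ φ < ∞ on conv supp_H Y. -/

import Mathlib

open MeasureTheory Set Filter
open scoped Classical

noncomputable section

/-- Scalar product on `ℝ^d`. -/
def dotp {d : ℕ} (a b : Fin d → ℝ) : ℝ := ∑ i, a i * b i

/-- `κ` is a regular version of the conditional law of `X` knowing the σ-algebra `H`. -/
structure CondLaw {Ω : Type*} (H : MeasurableSpace Ω) {mΩ : MeasurableSpace Ω}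
    (μ : Measure Ω) {E : Type*} [MeasurableSpace E] (X : Ω → E) (κ : Ω → Measure E) :
    Prop where
  isProb : ∀ ω, IsProbabilityMeasure (κ ω)
  meas : ∀ A : Set E, MeasurableSet A → Measurable[H] fun ω => κ ω A
  law : ∀ A : Set E, MeasurableSet A → ∀ B : Set Ω, MeasurableSet[H] B →
    ∫⁻ ω in B, κ ω A ∂μ = μ (B ∩ X ⁻¹' A)

/-- The support of the measure `κ ω`: the intersection of all closed sets of full
measure (for a regular conditional law this is the conditional support). -/
def condSupp {Ω E : Type*} [TopologicalSpace E] [MeasurableSpace E]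
    (κ : Ω → Measure E) (ω : Ω) : Set E :=
  ⋂₀ {A : Set E | IsClosed A ∧ κ ω A = 1}

/-- `γ` is (a version of) the conditional essential supremum of `X` knowing `H`. -/
def IsCondEssSup {Ω : Type*} (H : MeasurableSpace Ω) {mΩ : MeasurableSpace Ω}
    (μ : Measure Ω) (X : Ω → ℝ) (γ : Ω → EReal) : Prop :=
  Measurable[H] γ ∧ (∀ᵐ ω ∂μ, (X ω : EReal) ≤ γ ω) ∧
    ∀ ζ : Ω → EReal, Measurable[H] ζ → (∀ᵐ ω ∂μ, (X ω : EReal) ≤ ζ ω) →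
      ∀ᵐ ω ∂μ, γ ω ≤ ζ ω

/-- `γ` is (a version of) the conditional essential infimum of `X` knowing `H`. -/
def IsCondEssInf {Ω : Type*} (H : MeasurableSpace Ω) {mΩ : MeasurableSpace Ω}
    (μ : Measure Ω) (X : Ω → ℝ) (γ : Ω → EReal) : Prop :=
  Measurable[H] γ ∧ (∀ᵐ ω ∂μ, γ ω ≤ (X ω : EReal)) ∧
    ∀ ζ : Ω → EReal, Measurable[H] ζ → (∀ᵐ ω ∂μ, ζ ω ≤ (X ω : EReal)) →
      ∀ᵐ ω ∂μ, ζ ω ≤ γ ω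

/-- `p` is (a version of) the essential infimum of the family `S` of random variables. -/
def IsEssInfSet {Ω : Type*} {mΩ : MeasurableSpace Ω} (μ : Measure Ω)
    (S : Set (Ω → ℝ)) (p : Ω → EReal) : Prop :=
  Measurable[mΩ] p ∧ (∀ f ∈ S, ∀ᵐ ω ∂μ, p ω ≤ (f ω : EReal)) ∧
    ∀ ζ : Ω → EReal, Measurable[mΩ] ζ → (∀ f ∈ S, ∀ᵐ ω ∂μ, ζ ω ≤ (f ω : EReal)) →
      ∀ᵐ ω ∂μ, ζ ω ≤ p ω

/-- The set of super-hedging prices of the claim `Z` in the one-period market `(y, Y)`. -/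
def Prices {Ω : Type*} (H : MeasurableSpace Ω) {mΩ : MeasurableSpace Ω} (μ : Measure Ω)
    {d : ℕ} (y Y : Ω → Fin d → ℝ) (Z : Ω → ℝ) : Set (Ω → ℝ) :=
  {x | Measurable[H] x ∧ ∃ θ : Ω → Fin d → ℝ, Measurable[H] θ ∧
    ∀ᵐ ω ∂μ, Z ω ≤ x ω + dotp (θ ω) fun i => Y ω i - y ω i}

/-- One-dimensional version of `Prices`. -/
def Prices1 {Ω : Type*} (H : MeasurableSpace Ω) {mΩ : MeasurableSpace Ω} (μ : Measure Ω)
    (y Y : Ω → ℝ) (Z : Ω → ℝ) : Set (Ω → ℝ) :=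
  {x | Measurable[H] x ∧ ∃ θ : Ω → ℝ, Measurable[H] θ ∧
    ∀ᵐ ω ∂μ, Z ω ≤ x ω + θ ω * (Y ω - y ω)}

/-- One-period super-hedging prices of the zero claim in the market extended by the
additional asset `(pZ, Z)`. -/
def PricesExt {Ω : Type*} (H : MeasurableSpace Ω) {mΩ : MeasurableSpace Ω} (μ : Measure Ω)
    {d : ℕ} (y Y : Ω → Fin d → ℝ) (Z pZ : Ω → ℝ) : Set (Ω → ℝ) :=
  {x | Measurable[H] x ∧ ∃ α : Ω → ℝ, Measurable[H] α ∧ ∃ θ : Ω → Fin d → ℝ,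
    Measurable[H] θ ∧
    ∀ᵐ ω ∂μ, 0 ≤ x ω + α ω * (Z ω - pZ ω) + dotp (θ ω) fun i => Y ω i - y ω i}

/-- The function `f = -g + δ_{D}` of the paper, valued in `EReal`. -/
def fObj {Ω : Type*} {d : ℕ} (g : Ω → (Fin d → ℝ) → ℝ) (D : Ω → Set (Fin d → ℝ))
    (ω : Ω) (z : Fin d → ℝ) : EReal :=
  if z ∈ D ω then ((-(g ω z) : ℝ) : EReal) else ⊤

/-- Fenchel–Legendre conjugate of an `EReal`-valued function on `ℝ^d`. -/
def eConj {d : ℕ} (f : (Fin d → ℝ) → EReal) (x : Fin d → ℝ) : EReal :=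
  ⨆ z : Fin d → ℝ, ((dotp x z : ℝ) : EReal) - f z

/-- Convex-analytic indicator function `δ_s`. -/
def indicatorE {E : Type*} (s : Set E) (x : E) : EReal := if x ∈ s then 0 else ⊤

/-- Relative concave envelope of `g` with respect to `D`. -/
def concEnv {d : ℕ} (g : (Fin d → ℝ) → ℝ) (D : Set (Fin d → ℝ)) (x : Fin d → ℝ) : EReal :=
  ⨅ v ∈ {v : (Fin d → ℝ) → ℝ | ConcaveOn ℝ univ v ∧ ∀ z ∈ D, g z ≤ v z}, ((v x : ℝ) : EReal)

/-- Upper semicontinuous closure of an `EReal`-valued function. -/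
def usClosure {E : Type*} [TopologicalSpace E] (F : E → EReal) (x : E) : EReal :=
  Filter.limsup F (nhds x)

/-- The slope `θ^*` of Corollary 2.19, with the conventions of the paper. -/
def thetaStar (g : ℝ → ℝ) (M I : ℝ) (S : EReal) : ℝ :=
  if S = (I : EReal) then 0 else if S = ⊤ then M
  else (g S.toReal - g I) / (S.toReal - I)

/-- Multi-period super-hedging prices at time `t` of the claim `g` paid at time `T`. -/
def PricesMulti {Ω : Type*} {mΩ : MeasurableSpace Ω} (𝓕 : ℕ → MeasurableSpace Ω)
    (μ : Measure Ω) {d : ℕ} (S : ℕ → Ω → Fin d → ℝ) (t T : ℕ) (g : Ω → ℝ) :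
    Set (Ω → ℝ) :=
  {x | Measurable[𝓕 t] x ∧ ∃ θ : ℕ → Ω → Fin d → ℝ, (∀ u, Measurable[𝓕 u] (θ u)) ∧
    ∃ ε : Ω → ℝ, Measurable[𝓕 T] ε ∧ (∀ᵐ ω ∂μ, 0 ≤ ε ω) ∧
    ∀ᵐ ω ∂μ, x ω + (∑ u ∈ Finset.Icc (t+1) T,
      dotp (θ (u-1) ω) fun i => S u ω i - S (u-1) ω i) - ε ω = g ω}

/-- One-step super-hedging prices at time `t` of the (extended-real) claim `G`
paid at time `t+1`. -/
def OneStepPrices {Ω : Type*} {mΩ : MeasurableSpace Ω} (𝓕 : ℕ → MeasurableSpace Ω)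
    (μ : Measure Ω) {d : ℕ} (S : ℕ → Ω → Fin d → ℝ) (t : ℕ) (G : Ω → EReal) :
    Set (Ω → ℝ) :=
  {x | Measurable[𝓕 t] x ∧ ∃ θ : Ω → Fin d → ℝ, Measurable[𝓕 t] θ ∧
    ∀ᵐ ω ∂μ, G ω ≤ ((x ω + dotp (θ ω) fun i => S (t+1) ω i - S t ω i : ℝ) : EReal)}

/-- Multi-period super-hedging prices in the market extended by the additional asset `C`. -/
def PricesMultiExt {Ω : Type*} {mΩ : MeasurableSpace Ω} (𝓕 : ℕ → MeasurableSpace Ω)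
    (μ : Measure Ω) {d : ℕ} (S : ℕ → Ω → Fin d → ℝ) (C : ℕ → Ω → ℝ) (t T : ℕ)
    (g : Ω → ℝ) : Set (Ω → ℝ) :=
  {x | Measurable[𝓕 t] x ∧ ∃ θ : ℕ → Ω → Fin d → ℝ, (∀ u, Measurable[𝓕 u] (θ u)) ∧
    ∃ α : ℕ → Ω → ℝ, (∀ u, Measurable[𝓕 u] (α u)) ∧
    ∃ ε : Ω → ℝ, Measurable[𝓕 T] ε ∧ (∀ᵐ ω ∂μ, 0 ≤ ε ω) ∧
    ∀ᵐ ω ∂μ, x ω + (∑ u ∈ Finset.Icc (t+1) T,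
      ((dotp (θ (u-1) ω) fun i => S u ω i - S (u-1) ω i) +
        α (u-1) ω * (C u ω - C (u-1) ω))) - ε ω = g ω}

/-- The set `R_t^T` of claims super-replicable at zero cost, one-dimensional case. -/
def RsetM {Ω : Type*} {mΩ : MeasurableSpace Ω} (𝓕 : ℕ → MeasurableSpace Ω)
    (μ : Measure Ω) (S : ℕ → Ω → ℝ) (t T : ℕ) : Set (Ω → ℝ) :=
  {X | ∃ θ : ℕ → Ω → ℝ, (∀ u, Measurable[𝓕 u] (θ u)) ∧
    ∃ ε : Ω → ℝ, Measurable[𝓕 T] ε ∧ (∀ᵐ ω ∂μ, 0 ≤ ε ω) ∧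
    ∀ᵐ ω ∂μ, X ω = (∑ u ∈ Finset.Icc (t+1) T, θ (u-1) ω * (S u ω - S (u-1) ω)) - ε ω}

/-- Closure with respect to convergence in probability. -/
def closureP {Ω : Type*} {mΩ : MeasurableSpace Ω} (μ : Measure Ω) (A : Set (Ω → ℝ)) :
    Set (Ω → ℝ) :=
  {X | ∃ f : ℕ → Ω → ℝ, (∀ n, f n ∈ A) ∧ TendstoInMeasure μ f Filter.atTop X}

/-!
The forward implication is witnessed by `g = 0`. Conversely, if `g (Y)` has an `H`-measurable
super-hedging price `c`, then so has `c + n f 1_{f < 0}` for every price `f` of the zero claim and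
every `n`; since `p(g) ≥ 0`, all of these are nonnegative, which forces `f ≥ 0`.

Such a `c` exists: for each `ω`, a supergradient at `y ω` of the concave majorant of `g ω` gives
an affine function `c + θ · (z - y ω)` above `g ω` on `supp_H Y`. To choose it measurably, `g ω`
is tested along a measurable sequence dense in the conditional support (a Castaing
representation, built by dyadic refinement of charged balls), and the minimizers of the strongly
convex functions `θ ↦ max_{k ≤ m} (g ω (ζ_k) - θ · (ζ_k - y ω)) + ‖θ‖²` are shown to converge as
`m → ∞`. Lower semicontinuity of `g ω` carries the bound from the dense sequence to all of
`supp_H Y`.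
-/

open Metric TopologicalSpace Topology

section Support

variable {Ω E : Type*} {mΩ : MeasurableSpace Ω}

lemma condSupp_eq_support [TopologicalSpace E] [MeasurableSpace E] [OpensMeasurableSpace E]
    (κ : Ω → Measure E) (ω : Ω) [IsProbabilityMeasure (κ ω)] :
    condSupp κ ω = (κ ω).support := by
  rw [Measure.support_eq_sInter, condSupp]
  congr 1
  ext t
  exact and_congr_right fun ht => (prob_compl_eq_zero_iff ht.measurableSet).symm

/-- Centers are indices into `denseSeq E`; the `n`-th one lives at scale `2⁻¹ ^ (m + n)`. -/
def refineChain (next : ℕ → ℕ → Ω → ℕ) (i m : ℕ) : ℕ → Ω → ℕ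
  | 0 => next m i
  | n + 1 => fun ω => next (m + n + 1) (refineChain next i m n ω) ω

lemma measurable_refineChain {next : ℕ → ℕ → Ω → ℕ} (hnext : ∀ n c, Measurable (next n c))
    (i m : ℕ) : ∀ n, Measurable (refineChain next i m n)
  | 0 => hnext m i
  | n + 1 => by
    have hjoint : Measurable fun p : Ω × ℕ => next (m + n + 1) p.2 p.1 :=
      measurable_from_prod_countable_left fun c => hnext _ c
    exact hjoint.comp (measurable_id.prodMk (measurable_refineChain hnext i m n))

variable [MetricSpace E]

lemma exists_denseSeq_dist_lt [SecondCountableTopology E] [Nonempty E] (x : E) {ε : ℝ}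
    (hε : 0 < ε) : ∃ j, dist (denseSeq E j) x < ε := by
  obtain ⟨j, hj⟩ := Metric.denseRange_iff.1 (denseRange_denseSeq E) x ε hε
  exact ⟨j, by rwa [dist_comm]⟩

variable [MeasurableSpace E]

lemma measure_ball_pos_of_mem_support {ν : Measure E} {w x : E} {r : ℝ} (hw : w ∈ ν.support)
    (hwx : dist w x < r) : 0 < ν (ball x r) :=
  (Measure.mem_support_iff_forall w).1 hw _ (isOpen_ball.mem_nhds hwx)

lemma mem_support_of_tendsto {ν : Measure E} {x : ℕ → E} {z : E} {ρ : ℕ → ℝ}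
    (hx : Tendsto x atTop (𝓝 z)) (hρ : Tendsto ρ atTop (𝓝 0))
    (hpos : ∀ n, 0 < ν (ball (x n) (ρ n))) : z ∈ ν.support := by
  refine (nhds_basis_ball.mem_measureSupport).2 fun ε hε => ?_
  obtain ⟨n, hxn, hρn⟩ := ((Metric.tendsto_nhds.1 hx _ (half_pos hε)).and
    ((tendsto_order.1 hρ).2 _ (half_pos hε))).exists
  exact (hpos n).trans_le (measure_mono (ball_subset_ball' (by linarith)))

variable [SecondCountableTopology E] [Nonempty E]

local notation "q" => denseSeq E

lemma exists_denseSeq_ball_pos (ν : Measure E) [NeZero ν] (c : E) {r : ℝ} (hr : 0 < r) :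
    ∃ j, (0 < ν (ball c (2 * r)) → dist (q j) c < 2 * r) ∧ 0 < ν (ball (q j) r) := by
  by_cases h : 0 < ν (ball c (2 * r))
  · obtain ⟨w, hwc, hw⟩ := Measure.nonempty_inter_support_of_pos h
    rw [mem_ball] at hwc
    obtain ⟨j, hj⟩ := exists_denseSeq_dist_lt w (lt_min hr (sub_pos.2 hwc))
    refine ⟨j, fun _ => ?_, measure_ball_pos_of_mem_support hw ?_⟩
    · linarith [dist_triangle (q j) w c, min_le_right r (2 * r - dist w c)]
    · rw [dist_comm]; exact hj.trans_le (min_le_left _ _)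
  · obtain ⟨w, hw⟩ := Measure.nonempty_support (NeZero.ne ν)
    obtain ⟨j, hj⟩ := exists_denseSeq_dist_lt w hr
    exact ⟨j, fun h' => absurd h' h, measure_ball_pos_of_mem_support hw (by rwa [dist_comm])⟩

def IsRefinementStep (κ : Ω → Measure E) (next : ℕ → ℕ → Ω → ℕ) : Prop :=
  ∀ n c ω, (0 < κ ω (ball (q c) (2 * 2⁻¹ ^ n)) → dist (q (next n c ω)) (q c) < 2 * 2⁻¹ ^ n) ∧
    0 < κ ω (ball (q (next n c ω)) (2⁻¹ ^ n))

variable {κ : Ω → Measure E}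

lemma exists_measurable_refinementStep [∀ ω, NeZero (κ ω)] [BorelSpace E]
    (hκ : ∀ s, MeasurableSet s → Measurable fun ω => κ ω s) :
    ∃ next, (∀ n c, Measurable (next n c)) ∧ IsRefinementStep κ next := by
  have hex n c ω := exists_denseSeq_ball_pos (κ ω) (q c) (by positivity : (0 : ℝ) < 2⁻¹ ^ n)
  refine ⟨fun n c ω => Nat.find (hex n c ω), fun n c => measurable_find _ fun j => ?_,
    fun n c ω => Nat.find_spec (hex n c ω)⟩
  have hpos (x : E) (r : ℝ) : MeasurableSet {ω | 0 < κ ω (ball x r)} :=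
    measurableSet_lt measurable_const (hκ _ measurableSet_ball)
  exact ((hpos _ _).imp (MeasurableSet.const _)).inter (hpos _ _)

variable {next : ℕ → ℕ → Ω → ℕ} (hspec : IsRefinementStep κ next)
include hspec

lemma refineChain_ball_pos (i m n : ℕ) (ω : Ω) :
    0 < κ ω (ball (q (refineChain next i m n ω)) (2⁻¹ ^ (m + n))) := by
  cases n with
  | zero => exact (hspec m i ω).2
  | succ n => exact (hspec (m + n + 1) _ ω).2

lemma dist_refineChain_succ_lt (i m n : ℕ) (ω : Ω) :
    dist (q (refineChain next i m (n + 1) ω)) (q (refineChain next i m n ω)) <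
      2⁻¹ ^ (m + n) := by
  have h := (hspec (m + n + 1) (refineChain next i m n ω) ω).1
  rw [show (2 : ℝ) * 2⁻¹ ^ (m + n + 1) = 2⁻¹ ^ (m + n) by ring] at h
  exact h (refineChain_ball_pos hspec i m n ω)

omit hspec

theorem exists_measurable_dense_seq_support [∀ ω, NeZero (κ ω)] [BorelSpace E] [CompleteSpace E]
    (hκ : ∀ s, MeasurableSet s → Measurable fun ω => κ ω s) :
    ∃ ζ : ℕ → Ω → E, (∀ k, Measurable (ζ k)) ∧
      ∀ ω, (∀ k, ζ k ω ∈ (κ ω).support) ∧ (κ ω).support ⊆ closure (range fun k => ζ k ω) := by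
  obtain ⟨next, hnext, hspec⟩ := exists_measurable_refinementStep hκ
  set x : ℕ → ℕ → ℕ → Ω → E := fun i m n ω => q (refineChain next i m n ω)
  have hstep i m ω n : dist (x i m n ω) (x i m (n + 1) ω) ≤ 2 * 2⁻¹ ^ m / 2 / 2 ^ n := by
    rw [dist_comm]
    refine (dist_refineChain_succ_lt hspec i m n ω).le.trans_eq ?_
    rw [pow_add, inv_pow (2 : ℝ) n]
    ring
  choose ζ hζ using fun i m ω =>
    cauchySeq_tendsto_of_complete (cauchySeq_of_le_geometric_two (hstep i m ω))
  refine ⟨fun k => ζ k.unpair.1 k.unpair.2, fun k => ?_, fun ω => ⟨fun k => ?_, fun z hz => ?_⟩⟩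
  · exact measurable_of_tendsto_metrizable' atTop
      (fun n => measurable_from_nat.comp (measurable_refineChain hnext _ _ n))
      (tendsto_pi_nhds.2 fun ω => hζ _ _ ω)
  · have hρ : Tendsto (fun n => (2⁻¹ : ℝ) ^ (k.unpair.2 + n)) atTop (𝓝 0) := by
      simpa only [pow_add, mul_zero] using
        (tendsto_pow_atTop_nhds_zero_of_lt_one (by norm_num) (by norm_num)).const_mul
          ((2⁻¹ : ℝ) ^ k.unpair.2)
    exact mem_support_of_tendsto (hζ _ _ ω) hρ (refineChain_ball_pos hspec _ _ · ω)
  · -- started at `q i` within `2⁻¹ ^ m` of `z`, the chain stays within `4 * 2⁻¹ ^ m` of `q i`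
    rw [Metric.mem_closure_range_iff]
    intro ε hε
    obtain ⟨m, hm⟩ := exists_pow_lt_of_lt_one (by positivity : 0 < ε / 5)
      (by norm_num : (2⁻¹ : ℝ) < 1)
    have hm0 : (0 : ℝ) < 2⁻¹ ^ m := by positivity
    obtain ⟨i, hi⟩ := exists_denseSeq_dist_lt z hm0
    have h0 : dist (x i m 0 ω) (q i) < 2 * 2⁻¹ ^ m :=
      (hspec m i ω).1 (measure_ball_pos_of_mem_support hz (by rw [dist_comm]; linarith))
    have h1 : dist (x i m 0 ω) (ζ i m ω) ≤ 2 * 2⁻¹ ^ m := by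
      simpa using dist_le_of_le_geometric_two_of_tendsto (hstep i m ω) (hζ i m ω) 0
    refine ⟨Nat.pair i m, ?_⟩
    simp only [Nat.unpair_pair]
    linarith [dist_triangle z (q i) (x i m 0 ω), dist_triangle z (x i m 0 ω) (ζ i m ω),
      dist_comm z (q i), dist_comm (q i) (x i m 0 ω)]

end Support

section Supergradient

variable {E : Type*} [AddCommGroup E] [TopologicalSpace E] [IsTopologicalAddGroup E]
  [Module ℝ E] [ContinuousSMul ℝ E]

theorem ConcaveOn.exists_supergradient {φ : E → ℝ} (hφ : ConcaveOn ℝ univ φ)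
    (hc : Continuous φ) (x : E) : ∃ s : E →L[ℝ] ℝ, ∀ z, φ z ≤ φ x + s (z - x) := by
  set S : Set (E × ℝ) := {p | p.1 ∈ univ ∧ p.2 < φ p.1}
  have hS : IsOpen S := by simpa [S] using isOpen_lt continuous_snd (hc.comp continuous_fst)
  obtain ⟨L, hL⟩ := geometric_hahn_banach_open_point hφ.convex_strict_hypograph hS
    (x := (x, φ x)) (by simp)
  set β := L (0, 1)
  have hdec (z : E) (t : ℝ) : L (z, t) = L (z, 0) + t * β := by
    rw [← smul_eq_mul, ← L.map_smul, ← map_add]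
    simp
  have hβ : 0 < β := by
    have h := hL (x, φ x - 1) (by simp)
    rw [hdec x, hdec x (φ x)] at h
    linarith
  have hlt (z : E) : ∀ t < φ z, t < φ x + (L (x, 0) - L (z, 0)) / β := fun t ht => by
    have h := hL (z, t) ⟨mem_univ _, ht⟩
    rw [hdec z t, hdec x (φ x)] at h
    have h' : (t - φ x) * β < L (x, 0) - L (z, 0) := by linarith
    linarith [(lt_div_iff₀ hβ).2 h']
  refine ⟨-β⁻¹ • L.comp (ContinuousLinearMap.inl ℝ E ℝ), fun z =>
    (le_of_forall_lt (hlt z)).trans_eq ?_⟩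
  have hsub : L (z - x, 0) = L (z, 0) - L (x, 0) := by
    rw [← map_sub, Prod.mk_sub_mk, sub_zero]
  simp [hsub, div_eq_inv_mul]
  ring

end Supergradient

section Selection

open scoped InnerProductSpace

variable {E : Type*} [NormedAddCommGroup E] [InnerProductSpace ℝ E]

lemma cauchySeq_of_dist_sq_le {X : Type*} [PseudoMetricSpace X] {u : ℕ → X} {b : ℕ → ℝ}
    (hb : Tendsto b atTop (𝓝 0)) (h : ∀ N j l, N ≤ j → N ≤ l → dist (u j) (u l) ^ 2 ≤ b N) :
    CauchySeq u :=
  cauchySeq_of_le_tendsto_0 (fun N => √(b N))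
    (fun j l N hj hl => Real.le_sqrt_of_sq_le (h N j l hj hl)) (by simpa using hb.sqrt)

lemma inner_midpoint_left (a b v : E) :
    ⟪midpoint ℝ a b, v⟫_ℝ = (⟪a, v⟫_ℝ + ⟪b, v⟫_ℝ) / 2 := by
  rw [midpoint_eq_smul_add, inner_smul_left, inner_add_left]
  simp [div_eq_inv_mul]

lemma norm_midpoint_sq_add (a b : E) :
    ‖midpoint ℝ a b‖ ^ 2 + ‖a - b‖ ^ 2 / 4 = (‖a‖ ^ 2 + ‖b‖ ^ 2) / 2 := by
  rw [midpoint_eq_smul_add, norm_smul, mul_pow]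
  have := parallelogram_law_with_norm ℝ a b
  norm_num
  linarith

def penalizedMax (A : ℕ → ℝ) (B : ℕ → E) (m : ℕ) (θ : E) : ℝ :=
  (Finset.range (m + 1)).sup' Finset.nonempty_range_add_one (fun k => A k - ⟪θ, B k⟫_ℝ) +
    ‖θ‖ ^ 2

section penalizedMax

variable {A : ℕ → ℝ} {B : ℕ → E} {m : ℕ} {θ : E}

lemma le_penalizedMax {k : ℕ} (hk : k ≤ m) :
    A k - ⟪θ, B k⟫_ℝ + ‖θ‖ ^ 2 ≤ penalizedMax A B m θ := by
  unfold penalizedMax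
  gcongr
  exact Finset.le_sup' (fun k => A k - ⟪θ, B k⟫_ℝ) (Finset.mem_range_succ_iff.2 hk)

lemma penalizedMax_le {C : ℝ} (h : ∀ k, A k - ⟪θ, B k⟫_ℝ ≤ C) :
    penalizedMax A B m θ ≤ C + ‖θ‖ ^ 2 := by
  unfold penalizedMax
  gcongr
  exact Finset.sup'_le _ _ fun k _ => h k

lemma sub_norm_sq_div_four_le_penalizedMax : A 0 - ‖B 0‖ ^ 2 / 4 ≤ penalizedMax A B m θ := by
  have h := le_penalizedMax (A := A) (B := B) (θ := θ) (Nat.zero_le m)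
  nlinarith [real_inner_le_norm θ (B 0), sq_nonneg (‖θ‖ - ‖B 0‖ / 2)]

lemma monotone_penalizedMax : Monotone fun m => penalizedMax A B m θ := fun m l hml =>
  add_le_add_left (Finset.sup'_mono _ (Finset.range_subset_range.2 (by omega)) _) _

lemma continuous_penalizedMax : Continuous (penalizedMax A B m) := by
  unfold penalizedMax
  exact (Continuous.finset_sup'_apply _ fun _ _ => continuous_const.sub
    (continuous_id.inner continuous_const)).add (continuous_norm.pow 2)

lemma penalizedMax_midpoint_add (a b : E) :
    penalizedMax A B m (midpoint ℝ a b) + ‖a - b‖ ^ 2 / 4 ≤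
      (penalizedMax A B m a + penalizedMax A B m b) / 2 := by
  have hsup : (Finset.range (m + 1)).sup' Finset.nonempty_range_add_one
      (fun k => A k - ⟪midpoint ℝ a b, B k⟫_ℝ) ≤
      ((Finset.range (m + 1)).sup' Finset.nonempty_range_add_one (fun k => A k - ⟪a, B k⟫_ℝ) +
        (Finset.range (m + 1)).sup' Finset.nonempty_range_add_one
          (fun k => A k - ⟪b, B k⟫_ℝ)) / 2 := by
    refine Finset.sup'_le _ _ fun k hk => ?_
    rw [inner_midpoint_left]
    linarith [Finset.le_sup' (fun k => A k - ⟪a, B k⟫_ℝ) hk,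
      Finset.le_sup' (fun k => A k - ⟪b, B k⟫_ℝ) hk]
  unfold penalizedMax
  linarith [norm_midpoint_sq_add a b]

end penalizedMax

lemma exists_tendsto_minimizers_of_monotone [CompleteSpace E] {F : ℕ → E → ℝ} {θ : ℕ → E}
    (hmono : ∀ z, Monotone (F · z)) (hmin : ∀ m z, F m (θ m) ≤ F m z)
    (hconv : ∀ m a b, F m (midpoint ℝ a b) + ‖a - b‖ ^ 2 / 4 ≤ (F m a + F m b) / 2)
    (hbdd : BddAbove (range fun m => F m (θ m))) :
    ∃ L θ', Tendsto (fun m => F m (θ m)) atTop (𝓝 L) ∧ (∀ m, F m (θ m) ≤ L) ∧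
      Tendsto θ atTop (𝓝 θ') := by
  have hv_mono : Monotone fun m => F m (θ m) :=
    monotone_nat_of_le_succ fun m => (hmin m _).trans (hmono _ (Nat.le_succ m))
  set L := ⨆ m, F m (θ m)
  have hL : Tendsto (fun m => F m (θ m)) atTop (𝓝 L) := tendsto_atTop_ciSup hv_mono hbdd
  have hvL m : F m (θ m) ≤ L := le_ciSup hbdd m
  -- uniform convexity of `F m` makes the minimizers of the successive levels cluster
  have hclose N m l (hm : N ≤ m) (hl : m ≤ l) : ‖θ m - θ l‖ ^ 2 ≤ 2 * (L - F N (θ N)) := by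
    linarith [hconv m (θ m) (θ l), hmin m (midpoint ℝ (θ m) (θ l)), hmono (θ l) hl, hvL l,
      hv_mono hm]
  have hcauchy : CauchySeq θ := by
    refine cauchySeq_of_dist_sq_le (b := fun N => 2 * (L - F N (θ N)))
      (by simpa using ((tendsto_const_nhds (x := L)).sub hL).const_mul 2) fun N j l hj hl => ?_
    rw [dist_eq_norm]
    rcases le_total j l with hjl | hlj
    · exact hclose N j l hj hjl
    · rw [norm_sub_rev]; exact hclose N l j hl hlj
  obtain ⟨θ', hθ'⟩ := cauchySeq_tendsto_of_complete hcauchy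
  exact ⟨L, θ', hL, hvL, hθ'⟩

variable [SecondCountableTopology E] [MeasurableSpace E] [BorelSpace E]
  {Ω : Type*} {mΩ : MeasurableSpace Ω}

lemma measurable_penalizedMax {A : ℕ → Ω → ℝ} {B : ℕ → Ω → E} (hA : ∀ k, Measurable (A k))
    (hB : ∀ k, Measurable (B k)) {θ : Ω → E} (hθ : Measurable θ) (m : ℕ) :
    Measurable fun ω => penalizedMax (A · ω) (B · ω) m (θ ω) := by
  unfold penalizedMax
  exact (Finset.measurable_range_sup'' (f := fun k ω => A k ω - ⟪θ ω, B k ω⟫_ℝ) fun k _ =>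
    (hA k).sub (hθ.inner (hB k))).add (hθ.norm.pow_const 2)

variable [CompleteSpace E]

theorem exists_measurable_minimizer {F : Ω → E → ℝ} (hmeas : ∀ θ, Measurable fun ω => F ω θ)
    (hcont : ∀ ω, Continuous (F ω)) (hbdd : ∀ ω, BddBelow (range (F ω)))
    (hconv : ∀ ω a b, F ω (midpoint ℝ a b) + ‖a - b‖ ^ 2 / 4 ≤ (F ω a + F ω b) / 2) :
    ∃ θ : Ω → E, Measurable θ ∧ ∀ ω z, F ω (θ ω) ≤ F ω z := by
  set q := denseSeq E
  set ε : ℕ → ℝ := fun j => 1 / ((j : ℝ) + 1)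
  have hε : Tendsto ε atTop (𝓝 0) := tendsto_one_div_add_atTop_nhds_zero_nat
  have hε_anti : Antitone ε := fun a b hab => by simp only [ε]; gcongr
  have hex j ω : ∃ i, ∀ i', F ω (q i) ≤ F ω (q i') + ε j := by
    have hbdd' : BddBelow (range fun i => F ω (q i)) :=
      (hbdd ω).mono (range_comp_subset_range q (F ω))
    obtain ⟨i, hi⟩ := exists_lt_of_ciInf_lt
      (lt_add_of_pos_right (⨅ i, F ω (q i)) (by positivity : 0 < ε j))
    exact ⟨i, fun i' => by linarith [ciInf_le hbdd' i']⟩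
  set r : ℕ → Ω → E := fun j ω => q (Nat.find (hex j ω))
  have hr_meas j : Measurable (r j) := by
    refine measurable_from_nat.comp (measurable_find _ fun i => ?_)
    simp only [ofPred_forall]
    exact MeasurableSet.iInter fun i' =>
      measurableSet_le (hmeas _) ((hmeas _).add_const _)
  have hr_min j ω z : F ω (r j ω) ≤ F ω z + ε j :=
    (denseRange_denseSeq E).induction_on z
      (isClosed_le continuous_const ((hcont ω).add continuous_const))
      (Nat.find_spec (hex j ω))
  have hr_cauchy ω : CauchySeq fun j => r j ω := by
    refine cauchySeq_of_dist_sq_le (by simpa using hε.const_mul 4) fun N j l hj hl => ?_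
    rw [dist_eq_norm]
    linarith [hconv ω (r j ω) (r l ω), hr_min j ω (midpoint ℝ (r j ω) (r l ω)),
      hr_min l ω (midpoint ℝ (r j ω) (r l ω)), hε_anti hj, hε_anti hl]
  choose θ hθ using fun ω => cauchySeq_tendsto_of_complete (hr_cauchy ω)
  refine ⟨θ, measurable_of_tendsto_metrizable' atTop hr_meas (tendsto_pi_nhds.2 hθ),
    fun ω z => le_of_tendsto_of_tendsto' (((hcont ω).tendsto _).comp (hθ ω))
      (by simpa using tendsto_const_nhds.add hε) (hr_min · ω z)⟩

theorem exists_measurable_affine_majorant {A : ℕ → Ω → ℝ} {B : ℕ → Ω → E}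
    (hA : ∀ k, Measurable (A k)) (hB : ∀ k, Measurable (B k))
    (hbdd : ∀ ω, ∃ θ C, ∀ k, A k ω - ⟪θ, B k ω⟫_ℝ ≤ C) :
    ∃ (θ : Ω → E) (c : Ω → ℝ), Measurable θ ∧ Measurable c ∧
      ∀ ω k, A k ω - ⟪θ ω, B k ω⟫_ℝ ≤ c ω := by
  set F : ℕ → Ω → E → ℝ := fun m ω => penalizedMax (A · ω) (B · ω) m
  choose θm hθm hmin using fun m => exists_measurable_minimizer (F := F m)
    (fun _ => measurable_penalizedMax hA hB measurable_const m)
    (fun _ => continuous_penalizedMax)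
    (fun ω => ⟨_, forall_mem_range.2 fun _ => sub_norm_sq_div_four_le_penalizedMax⟩)
    (fun _ => penalizedMax_midpoint_add)
  choose θ₀ C₀ hC₀ using hbdd
  choose L θ hL hvL hθ using fun ω => exists_tendsto_minimizers_of_monotone
    (F := (F · ω)) (θ := (θm · ω)) (fun _ => monotone_penalizedMax) (hmin · ω)
    (fun _ => penalizedMax_midpoint_add)
    ⟨_, forall_mem_range.2 fun m => (hmin m ω (θ₀ ω)).trans (penalizedMax_le (hC₀ ω))⟩
  have hL_meas : Measurable L := measurable_of_tendsto_metrizable' atTop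
    (fun m => measurable_penalizedMax hA hB (hθm m) m) (tendsto_pi_nhds.2 hL)
  have hθ_meas : Measurable θ :=
    measurable_of_tendsto_metrizable' atTop hθm (tendsto_pi_nhds.2 hθ)
  refine ⟨θ, fun ω => L ω - ‖θ ω‖ ^ 2, hθ_meas, hL_meas.sub (hθ_meas.norm.pow_const 2),
    fun ω k => ?_⟩
  have hcont : Continuous fun t : E => A k ω - ⟪t, B k ω⟫_ℝ + ‖t‖ ^ 2 := by fun_prop
  have hlim := le_of_tendsto ((hcont.tendsto _).comp (hθ ω))
    (eventually_atTop.2 ⟨k, fun m hm => (le_penalizedMax hm).trans (hvL ω m)⟩)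
  linarith

end Selection

section Market

open scoped InnerProductSpace

variable {Ω : Type*} {d : ℕ}

lemma dotp_ofLp_eq_inner (θ : EuclideanSpace ℝ (Fin d)) (v : Fin d → ℝ) :
    dotp θ.ofLp v = ⟪θ, WithLp.toLp 2 v⟫_ℝ := by
  simp [EuclideanSpace.inner_eq_star_dotProduct, dotp, dotProduct, mul_comm]

lemma LowerSemicontinuous.isClosed_setOf_le {X : Type*} [TopologicalSpace X] {f h : X → ℝ}
    (hf : LowerSemicontinuous f) (hh : Continuous h) : IsClosed {z | f z ≤ h z} := by
  convert (hf.add hh.neg.lowerSemicontinuous).isClosed_preimage 0 using 1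
  ext z
  simp [← sub_eq_add_neg]

variable {mΩ : MeasurableSpace Ω}

theorem exists_measurable_superhedge (κ : Ω → Measure (Fin d → ℝ))
    [∀ ω, IsProbabilityMeasure (κ ω)] (hκ : ∀ s, MeasurableSet s → Measurable fun ω => κ ω s)
    {y : Ω → Fin d → ℝ} (hy : Measurable y) {g : Ω → (Fin d → ℝ) → ℝ}
    (hg : Measurable fun p : Ω × (Fin d → ℝ) => g p.1 p.2)
    (hg_lsc : ∀ ω, LowerSemicontinuous (g ω))
    (hg_conc : ∀ ω, ∃ φ : (Fin d → ℝ) → ℝ, ConcaveOn ℝ univ φ ∧ ∀ z ∈ condSupp κ ω, g ω z ≤ φ z) :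
    ∃ (c : Ω → ℝ) (θ : Ω → Fin d → ℝ), Measurable c ∧ Measurable θ ∧
      ∀ ω, ∀ z ∈ condSupp κ ω, g ω z ≤ c ω + dotp (θ ω) (z - y ω) := by
  simp_rw [condSupp_eq_support] at hg_conc ⊢
  obtain ⟨ζ, hζ_meas, hζ⟩ := exists_measurable_dense_seq_support hκ
  have hbdd ω : ∃ θ C, ∀ k, g ω (ζ k ω) - ⟪θ, WithLp.toLp 2 (ζ k ω - y ω)⟫_ℝ ≤ C := by
    obtain ⟨φ, hφ, hgφ⟩ := hg_conc ω
    obtain ⟨s, hs⟩ := hφ.exists_supergradient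
      (continuousOn_univ.1 (hφ.continuousOn isOpen_univ)) (y ω)
    refine ⟨(InnerProductSpace.toDual ℝ _).symm
      (s.comp (EuclideanSpace.equiv (Fin d) ℝ).toContinuousLinearMap), φ (y ω), fun k => ?_⟩
    rw [InnerProductSpace.toDual_symm_apply]
    change g ω (ζ k ω) - s (ζ k ω - y ω) ≤ φ (y ω)
    linarith [hgφ _ ((hζ ω).1 k), hs (ζ k ω)]
  obtain ⟨θ, c, hθ, hc, hmaj⟩ := exists_measurable_affine_majorant
    (A := fun k ω => g ω (ζ k ω)) (B := fun k ω => WithLp.toLp 2 (ζ k ω - y ω))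
    (fun k => hg.comp (measurable_id.prodMk (hζ_meas k)))
    (fun k => (PiLp.continuous_toLp 2 _).measurable.comp ((hζ_meas k).sub hy)) hbdd
  refine ⟨c, fun ω => (θ ω).ofLp, hc, (PiLp.continuous_ofLp 2 _).measurable.comp hθ,
    fun ω z hz => ?_⟩
  simp_rw [dotp_ofLp_eq_inner]
  have hclosed : IsClosed {z | g ω z ≤ c ω + ⟪θ ω, WithLp.toLp 2 (z - y ω)⟫_ℝ} :=
    (hg_lsc ω).isClosed_setOf_le (by fun_prop)
  refine hclosed.closure_subset_iff.2 ?_ ((hζ ω).2 hz)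
  rintro _ ⟨k, rfl⟩
  exact sub_le_iff_le_add.1 (hmaj ω k)

end Market

section Pricing

variable {Ω : Type*} {H : MeasurableSpace Ω} {mΩ : MeasurableSpace Ω} {μ : Measure Ω} {d : ℕ}
  {y Y : Ω → Fin d → ℝ}

lemma zero_mem_prices_zero : (fun _ => (0 : ℝ)) ∈ Prices H μ y Y fun _ => (0 : ℝ) :=
  ⟨measurable_const, 0, measurable_const, ae_of_all _ fun _ => by simp [dotp]⟩

lemma add_mul_mem_prices {Z x f t : Ω → ℝ} (hx : x ∈ Prices H μ y Y Z)
    (hf : f ∈ Prices H μ y Y fun _ => 0) (ht : Measurable[H] t) (ht_nonneg : ∀ ω, 0 ≤ t ω) :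
    (fun ω => x ω + t ω * f ω) ∈ Prices H μ y Y Z := by
  obtain ⟨hx_meas, θ, hθ, hxZ⟩ := hx
  obtain ⟨hf_meas, η, hη, hf0⟩ := hf
  refine ⟨hx_meas.add (ht.mul hf_meas), fun ω => θ ω + t ω • η ω, hθ.add (ht.smul hη), ?_⟩
  filter_upwards [hxZ, hf0] with ω hxω hfω
  have hdot (v : Fin d → ℝ) :
      dotp (θ ω + t ω • η ω) v = dotp (θ ω) v + t ω * dotp (η ω) v := by
    simp only [dotp, Pi.add_apply, Pi.smul_apply, smul_eq_mul, add_mul, Finset.sum_add_distrib,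
      Finset.mul_sum, mul_assoc]
  rw [hdot]
  nlinarith [mul_nonneg (ht_nonneg ω) hfω]

lemma ae_nonneg_of_mem_prices_zero {Z x f : Ω → ℝ} (hx : x ∈ Prices H μ y Y Z)
    (hZ : ∀ x' ∈ Prices H μ y Y Z, ∀ᵐ ω ∂μ, 0 ≤ x' ω) (hf : f ∈ Prices H μ y Y fun _ => 0) :
    ∀ᵐ ω ∂μ, 0 ≤ f ω := by
  have hneg : MeasurableSet[H] {ω | f ω < 0} := measurableSet_lt hf.1 measurable_const
  have hn (n : ℕ) := hZ _ (add_mul_mem_prices hx hf (measurable_const.indicator hneg)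
    fun ω => indicator_nonneg (fun _ _ => n.cast_nonneg) ω)
  filter_upwards [ae_all_iff.2 hn] with ω hω
  by_contra! hfω
  obtain ⟨n, hn⟩ := exists_nat_gt (x ω / -f ω)
  have h := hω n
  simp only [indicator_of_mem (show ω ∈ {ω | f ω < 0} from hfω)] at h
  rw [div_lt_iff₀ (neg_pos.2 hfω)] at hn
  linarith

lemma IsEssInfSet.ae_eq_of_mem_of_forall_ae_le {S : Set (Ω → ℝ)} {p : Ω → EReal} {g : Ω → ℝ}
    (hp : IsEssInfSet μ S p) (hg : Measurable g) (hgS : g ∈ S)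
    (hle : ∀ f ∈ S, ∀ᵐ ω ∂μ, g ω ≤ f ω) : p =ᵐ[μ] fun ω => (g ω : EReal) := by
  filter_upwards [hp.2.1 g hgS, hp.2.2 _ (measurable_coe_real_ereal.comp hg)
    fun f hf => (hle f hf).mono fun ω h => EReal.coe_le_coe_iff.2 h] with ω h1 h2
  exact le_antisymm h1 h2

end Pricing

theorem aip_iff_nonneg_price_of_some_claim_general
    {Ω : Type*} (H : MeasurableSpace Ω) [mΩ : MeasurableSpace Ω] (μ : Measure Ω)
    {d : ℕ} (y Y : Ω → Fin d → ℝ)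
    (hy : Measurable[H] y)
    (κ : Ω → Measure (Fin d → ℝ)) (hκ : CondLaw H μ Y κ)
    (hYsupp : ∀ ω, Y ω ∈ condSupp κ ω)
    (p0 : Ω → EReal)
    (hp0 : IsEssInfSet μ (Prices H μ y Y fun _ => (0:ℝ)) p0) :
    (p0 =ᵐ[μ] fun _ => (0:EReal)) ↔
      ∃ g : Ω → (Fin d → ℝ) → ℝ,
        (Measurable[H.prod inferInstance] fun pr : Ω × (Fin d → ℝ) => g pr.1 pr.2) ∧
        (∀ ω, LowerSemicontinuous (g ω)) ∧ (∀ ω z, 0 ≤ g ω z) ∧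
        (∀ ω, ∃ φ : (Fin d → ℝ) → ℝ, ConcaveOn ℝ Set.univ φ ∧
          ∀ x ∈ convexHull ℝ (condSupp κ ω), g ω x ≤ φ x) ∧
        ∃ pg : Ω → EReal, IsEssInfSet μ (Prices H μ y Y fun ω => g ω (Y ω)) pg ∧
          ∀ᵐ ω ∂μ, (0:EReal) ≤ pg ω := by
  constructor
  · intro hp0_eq
    exact ⟨fun _ _ => 0, measurable_const, fun _ => lowerSemicontinuous_const, fun _ _ => le_rfl,
      fun _ => ⟨0, concaveOn_const 0 convex_univ, fun _ _ => le_rfl⟩, p0, hp0,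
      hp0_eq.mono fun _ h => h.ge⟩
  · rintro ⟨g, hg, hg_lsc, -, hg_conc, pg, hpg, hpg_nonneg⟩
    have := hκ.isProb
    obtain ⟨c, θ, hc, hθ, hhedge⟩ := exists_measurable_superhedge κ hκ.meas hy hg hg_lsc
      fun ω => (hg_conc ω).imp fun _ hφ => ⟨hφ.1, fun z hz => hφ.2 z (subset_convexHull ℝ _ hz)⟩
    have hc_mem : c ∈ Prices H μ y Y fun ω => g ω (Y ω) :=
      ⟨hc, θ, hθ, ae_of_all _ fun ω => hhedge ω (Y ω) (hYsupp ω)⟩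
    have hg_prices : ∀ x ∈ Prices H μ y Y fun ω => g ω (Y ω), ∀ᵐ ω ∂μ, 0 ≤ x ω := fun x hx => by
      filter_upwards [hpg.2.1 x hx, hpg_nonneg] with ω h1 h2
      exact EReal.coe_nonneg.1 (h2.trans h1)
    simpa using hp0.ae_eq_of_mem_of_forall_ae_le measurable_const zero_mem_prices_zero
      fun f hf => ae_nonneg_of_mem_prices_zero hc_mem hg_prices hf

/-- AIP holds if and only if the infimum super-hedging cost of some
nonnegative `H`-normal integrand `g`, bounded above by a finite concave function on
`conv supp_H Y`, is almost surely nonnegative. -/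
theorem aip_iff_nonneg_price_of_some_claim
    {Ω : Type*} (H : MeasurableSpace Ω) [mΩ : MeasurableSpace Ω] (μ : Measure Ω)
    [IsProbabilityMeasure μ] [μ.IsComplete] (hHF : H ≤ mΩ)
    (hHcomp : ∀ s : Set Ω, μ s = 0 → MeasurableSet[H] s)
    {d : ℕ} (y Y : Ω → Fin d → ℝ)
    (hy : Measurable[H] y) (hY : Measurable[mΩ] Y)
    (hy0 : ∀ ω i, 0 ≤ y ω i) (hY0 : ∀ ω i, 0 ≤ Y ω i)
    (κ : Ω → Measure (Fin d → ℝ)) (hκ : CondLaw H μ Y κ)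
    (hYsupp : ∀ ω, Y ω ∈ condSupp κ ω)
    (p0 : Ω → EReal)
    (hp0 : IsEssInfSet μ (Prices H μ y Y fun _ => (0:ℝ)) p0) :
    (p0 =ᵐ[μ] fun _ => (0:EReal)) ↔
      ∃ g : Ω → (Fin d → ℝ) → ℝ,
        (Measurable[H.prod inferInstance] fun pr : Ω × (Fin d → ℝ) => g pr.1 pr.2) ∧
        (∀ ω, LowerSemicontinuous (g ω)) ∧ (∀ ω z, 0 ≤ g ω z) ∧
        (∀ ω, ∃ φ : (Fin d → ℝ) → ℝ, ConcaveOn ℝ Set.univ φ ∧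
          ∀ x ∈ convexHull ℝ (condSupp κ ω), g ω x ≤ φ x) ∧
        ∃ pg : Ω → EReal, IsEssInfSet μ (Prices H μ y Y fun ω => g ω (Y ω)) pg ∧
          ∀ᵐ ω ∂μ, (0:EReal) ≤ pg ω :=
  aip_iff_nonneg_price_of_some_claim_general H (mΩ := mΩ) μ y Y hy κ hκ hYsupp p0 hp0
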